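/- Fix ω > 0, γ > 0, β > 0 and p with 0 ≤ p < p_e, where p_e = 1/(e^{2ωβ} + 1) and λ = γ/(2p_e − 1) (a colder initial probe). Then there exists t > 0 such that δ(t)² > α(t), where δ(t) = 1 − e^{λt} + 2t(p_e − p)(λ²/γ) e^{λt} and α(t) = 1 − a e^{2λt} + b e^{λt} with a = (p_e − p)²/(p_e(1 − p_e)), b = (p_e − p)(2p_e − 1)/(p_e(1 − p_e)). Hence a colder probe achieves transient quantum Fisher information strictly exceeding the steady-state value. -/

import Mathlib

/-!
At the time `t⋆ = γ / (2 (p_e - p) λ²)` the two exponential terms of `δ` cancel, so `δ(t⋆) = 1`.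
On the other hand `α(t) < 1` for every `t`: a cold probe has `a > 0`, and `b < 0` because a
bath at positive temperature has `p_e < 1/2`.
-/

open Real

lemma one_div_exp_add_one_lt_half {x : ℝ} (hx : 0 < x) : 1 / (exp x + 1) < 1 / 2 := by
  have : 1 < exp x := one_lt_exp_iff.mpr hx
  gcongr
  linarith

lemma transient_factor_eq_one_at {c lam γ : ℝ} (hc : c ≠ 0) (hlam : lam ≠ 0) (hγ : γ ≠ 0) :
    let t := γ / (2 * c * lam ^ 2)
    1 - exp (lam * t) + 2 * t * c * (lam ^ 2 / γ) * exp (lam * t) = 1 := by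
  intro t
  have : 2 * t * c * (lam ^ 2 / γ) = 1 := by
    simp only [t]
    field_simp
  rw [this]
  ring

lemma one_sub_mul_exp_two_mul_add_mul_exp_lt_one {a b lam t : ℝ} (ha : 0 < a) (hb : b < 0) :
    1 - a * exp (2 * lam * t) + b * exp (lam * t) < 1 := by
  have hexp : exp (2 * lam * t) = exp (lam * t) ^ 2 := by
    rw [← exp_nat_mul]
    ring_nf
  rw [hexp]
  nlinarith [exp_pos (lam * t), mul_neg_of_neg_of_pos hb (exp_pos (lam * t))]

theorem cold_probe_stmt_15_general (ω γ β p : ℝ) (hω : 0 < ω) (hγ : 0 < γ) (hβ : 0 < β)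
    (pe lam a b : ℝ)
    (hpe : pe = 1 / (Real.exp (2 * ω * β) + 1))
    (hpcold : p < pe)
    (hlam : lam = γ / (2 * pe - 1))
    (ha : a = (pe - p) ^ 2 / (pe * (1 - pe)))
    (hb : b = (pe - p) * (2 * pe - 1) / (pe * (1 - pe))) :
    ∃ t : ℝ, 0 < t ∧
      (1 - Real.exp (lam * t) + 2 * t * (pe - p) * (lam ^ 2 / γ) * Real.exp (lam * t)) ^ 2 >
        1 - a * Real.exp (2 * lam * t) + b * Real.exp (lam * t) := by
  have hpe_pos : 0 < pe := by rw [hpe]; positivity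
  have hpe_half : pe < 1 / 2 := hpe ▸ one_div_exp_add_one_lt_half (by positivity)
  have hgap : 0 < pe - p := by linarith
  have hvar : 0 < pe * (1 - pe) := by nlinarith
  have hlam_neg : lam < 0 := hlam ▸ div_neg_of_pos_of_neg hγ (by linarith)
  have ha_pos : 0 < a := ha ▸ div_pos (by positivity) hvar
  have hb_neg : b < 0 := hb ▸ div_neg_of_neg_of_pos (mul_neg_of_pos_of_neg hgap (by linarith)) hvar
  refine ⟨γ / (2 * (pe - p) * lam ^ 2), div_pos hγ (mul_pos (by positivity) (sq_pos_of_neg hlam_neg)), ?_⟩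
  rw [transient_factor_eq_one_at hgap.ne' hlam_neg.ne hγ.ne', one_pow]
  exact one_sub_mul_exp_two_mul_add_mul_exp_lt_one ha_pos hb_neg

/-- For a colder initial probe (`0 ≤ p < p_e`), there exists a
finite time `t > 0` with `δ(t)² > α(t)`: a colder probe achieves transient quantum
Fisher information strictly exceeding the steady-state value. -/
theorem cold_probe_stmt_15 (ω γ β p : ℝ) (hω : 0 < ω) (hγ : 0 < γ) (hβ : 0 < β)
    (pe lam a b : ℝ)
    (hpe : pe = 1 / (Real.exp (2 * ω * β) + 1))
    (hp0 : 0 ≤ p) (hpcold : p < pe)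
    (hlam : lam = γ / (2 * pe - 1))
    (ha : a = (pe - p) ^ 2 / (pe * (1 - pe)))
    (hb : b = (pe - p) * (2 * pe - 1) / (pe * (1 - pe))) :
    ∃ t : ℝ, 0 < t ∧
      (1 - Real.exp (lam * t) + 2 * t * (pe - p) * (lam ^ 2 / γ) * Real.exp (lam * t)) ^ 2 >
        1 - a * Real.exp (2 * lam * t) + b * Real.exp (lam * t) :=
  cold_probe_stmt_15_general ω γ β p hω hγ hβ pe lam a b hpe hpcold hlam ha hb
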